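/- The eight cubic polynomials φᵢ = 5λᵢ³ − 5λᵢ² + λᵢ (i = 1,…,4) and ψᵢ = −2λᵢ² + 4λᵢ − 2 + 3·∑_{j≠i} λⱼ² + 30·∏_{j≠i} λⱼ (i = 1,…,4) on a nondegenerate tetrahedron T are linearly independent. -/

import Mathlib

open MeasureTheory MvPolynomial
open scoped RealInnerProductSpace

noncomputable section

/-- Euclidean 3-space. -/
abbrev E3 := EuclideanSpace ℝ (Fin 3)

/-- Evaluate a polynomial in 3 variables at a point of `E3`. -/
def evalP (x : E3) (p : MvPolynomial (Fin 3) ℝ) : ℝ :=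
  MvPolynomial.eval (fun j => x j) p

/-- The (closed) facet of the tetrahedron opposite to vertex `i`. -/
def face (a : Fin 4 → E3) (i : Fin 4) : Set E3 :=
  convexHull ℝ (a '' {j | j ≠ i})

/-- The (closed) tetrahedron with vertices `a`. -/
def tetra (a : Fin 4 → E3) : Set E3 :=
  convexHull ℝ (Set.range a)

/-! At a vertex the barycentric coordinates form a unit vector; at the centroid of a face they are
`0` opposite the face and `1/3` elsewhere. Since the `λᵢ` are affine, a vanishing combination
`∑ cᵢ φᵢ + ∑ dᵢ ψᵢ` evaluated at the four vertices and the four face centroids yields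
`cⱼ + ∑_{i ≠ j} dᵢ = 0` and `-(∑_{i ≠ j} cᵢ)/27 + dⱼ/9 - 2 (∑_{i ≠ j} dᵢ)/9 = 0`. The first family
gives `cⱼ = dⱼ - ∑ dᵢ`, the second then forces all `dⱼ` to be equal, and summing kills them. -/

open Finset

theorem Finsupp.eq_zero_or_eq_single_one_of_sum_le_one {σ : Type*} {d : σ →₀ ℕ}
    (hd : (d.sum fun _ e => e) ≤ 1) : d = 0 ∨ ∃ i, d = Finsupp.single i 1 := by
  interval_cases h : d.sum fun _ e => e
  · exact .inl ((Finsupp.degree_eq_zero_iff d).mp h)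
  · exact .inr ((Finsupp.sum_eq_one_iff d).mp h)

theorem MvPolynomial.eval_sum_smul_of_totalDegree_le_one {σ ι R : Type*} [CommSemiring R]
    {p : MvPolynomial σ R} (hp : p.totalDegree ≤ 1) {s : Finset ι} {w : ι → R}
    (hw : ∑ j ∈ s, w j = 1) (v : ι → σ → R) :
    eval (∑ j ∈ s, w j • v j) p = ∑ j ∈ s, w j * eval (v j) p := by
  conv_lhs => rw [p.as_sum, map_sum]
  conv_rhs => rw [p.as_sum]
  simp_rw [map_sum, mul_sum]
  rw [sum_comm]
  refine sum_congr rfl fun d hd => ?_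
  rcases Finsupp.eq_zero_or_eq_single_one_of_sum_le_one ((le_totalDegree hd).trans hp) with
    rfl | ⟨i, rfl⟩
  · simp [← sum_mul, hw]
  · simp [eval_monomial, Finset.sum_apply, mul_sum, mul_left_comm]

theorem evalP_lam_sum_smul {a : Fin 4 → E3} {lam : Fin 4 → MvPolynomial (Fin 3) ℝ}
    (hdeg : ∀ i, (lam i).totalDegree ≤ 1)
    (hval : ∀ i j, evalP (a j) (lam i) = if i = j then 1 else 0)
    {w : Fin 4 → ℝ} (hw : ∑ k, w k = 1) (i : Fin 4) :
    evalP (∑ k, w k • a k) (lam i) = w i := by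
  have hcoord : (fun j => (∑ k, w k • a k) j) = ∑ k, w k • fun j => a k j := by
    ext j; simp
  calc evalP (∑ k, w k • a k) (lam i) = ∑ k, w k * evalP (a k) (lam i) := by
        rw [evalP, hcoord, eval_sum_smul_of_totalDegree_le_one (hdeg i) hw]; rfl
    _ = w i := by simp [hval]

-- `φᵢ` and `ψᵢ` as functions of the barycentric coordinate vector `μ`.
def bubblePhi (t : ℝ) : ℝ := 5 * t ^ 3 - 5 * t ^ 2 + t

def bubblePsi (μ : Fin 4 → ℝ) (i : Fin 4) : ℝ :=
  (-2) * μ i ^ 2 + 4 * μ i - 2 + 3 * ∑ j ∈ univ.erase i, μ j ^ 2 + 30 * ∏ j ∈ univ.erase i, μ j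

def bubbleComb (c d : Fin 4 → ℝ) (μ : Fin 4 → ℝ) : ℝ :=
  ∑ i, c i * bubblePhi (μ i) + ∑ i, d i * bubblePsi μ i

def vertexWeights (j : Fin 4) : Fin 4 → ℝ := fun k => if k = j then 1 else 0

def faceCentroidWeights (j : Fin 4) : Fin 4 → ℝ := fun k => if k = j then 0 else 1 / 3

lemma vertexWeights_nonneg (j k : Fin 4) : 0 ≤ vertexWeights j k := by
  unfold vertexWeights; split_ifs <;> norm_num

lemma sum_vertexWeights (j : Fin 4) : ∑ k, vertexWeights j k = 1 := by
  simp [vertexWeights]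

lemma faceCentroidWeights_nonneg (j k : Fin 4) : 0 ≤ faceCentroidWeights j k := by
  unfold faceCentroidWeights; split_ifs <;> norm_num

lemma sum_faceCentroidWeights (j : Fin 4) : ∑ k, faceCentroidWeights j k = 1 := by
  fin_cases j <;> simp [faceCentroidWeights, Fin.sum_univ_four] <;> norm_num

lemma bubbleComb_vertexWeights (c d : Fin 4 → ℝ) (j : Fin 4) :
    bubbleComb c d (vertexWeights j) = c j + (∑ i, d i - d j) := by
  fin_cases j <;>
    simp [bubbleComb, bubblePhi, bubblePsi, vertexWeights, ← filter_ne', prod_filter,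
      Fin.sum_univ_four, Fin.prod_univ_four] <;> ring

lemma bubbleComb_faceCentroidWeights (c d : Fin 4 → ℝ) (j : Fin 4) :
    bubbleComb c d (faceCentroidWeights j) =
      -(∑ i, c i - c j) / 27 + d j / 9 - 2 * (∑ i, d i - d j) / 9 := by
  fin_cases j <;>
    simp [bubbleComb, bubblePhi, bubblePsi, faceCentroidWeights, ← filter_ne', sum_filter,
      prod_filter, Fin.sum_univ_four, Fin.prod_univ_four] <;> ring

lemma eq_zero_of_bubbleComb_eq_zero {c d : Fin 4 → ℝ}
    (hvert : ∀ j, bubbleComb c d (vertexWeights j) = 0)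
    (hface : ∀ j, bubbleComb c d (faceCentroidWeights j) = 0) : c = 0 ∧ d = 0 := by
  set C := ∑ i, c i
  set D := ∑ i, d i
  have hc : ∀ j, c j = d j - D := fun j => by
    linarith [bubbleComb_vertexWeights c d j ▸ hvert j]
  have hd : ∀ j, 10 * d j = C + 7 * D := fun j => by
    linarith [bubbleComb_faceCentroidWeights c d j ▸ hface j, hc j]
  have hCD : C = -3 * D := by
    simp only [C, hc, sum_sub_distrib, sum_const, card_univ, Fintype.card_fin]; ring
  have hD : 10 * D = 4 * (C + 7 * D) := by
    simp only [D, mul_sum, hd, sum_const, card_univ, Fintype.card_fin]; ring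
  have hD0 : D = 0 := by linarith
  have hd0 : ∀ j, d j = 0 := fun j => by linarith [hd j]
  exact ⟨funext fun j => by simp [hc, hd0, hD0], funext hd0⟩

lemma sum_mul_evalP_bubble_eq_bubbleComb (lam : Fin 4 → MvPolynomial (Fin 3) ℝ)
    (g : Fin 4 ⊕ Fin 4 → ℝ) (x : E3) :
    ∑ s, g s * evalP x (Sum.elim
          (fun i => 5 * lam i ^ 3 - 5 * lam i ^ 2 + lam i)
          (fun i => (-2) * lam i ^ 2 + 4 * lam i - 2
              + 3 * ∑ j ∈ univ.erase i, lam j ^ 2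
              + 30 * ∏ j ∈ univ.erase i, lam j) s) =
      bubbleComb (g ∘ Sum.inl) (g ∘ Sum.inr) fun i => evalP x (lam i) := by
  simp [Fintype.sum_sum_type, bubbleComb, bubblePhi, bubblePsi, evalP]

theorem stmt2_general (a : Fin 4 → E3)
    (lam : Fin 4 → MvPolynomial (Fin 3) ℝ)
    (hdeg : ∀ i, (lam i).totalDegree ≤ 1)
    (hval : ∀ i j, evalP (a j) (lam i) = if i = j then 1 else 0) :
    LinearIndependent ℝ (fun s : Fin 4 ⊕ Fin 4 =>
      (tetra a).restrict (fun x => evalP x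
        (Sum.elim
          (fun i => 5 * lam i ^ 3 - 5 * lam i ^ 2 + lam i)
          (fun i => (-2) * lam i ^ 2 + 4 * lam i - 2
              + 3 * ∑ j ∈ Finset.univ.erase i, lam j ^ 2
              + 30 * ∏ j ∈ Finset.univ.erase i, lam j) s))) := by
  rw [Fintype.linearIndependent_iff]
  intro g hg
  have hcomb : ∀ w : Fin 4 → ℝ, (∀ k, 0 ≤ w k) → ∑ k, w k = 1 →
      bubbleComb (g ∘ Sum.inl) (g ∘ Sum.inr) w = 0 := by
    intro w hw0 hw1
    have hx : ∑ k, w k • a k ∈ tetra a :=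
      (convex_convexHull ℝ _).sum_mem (fun k _ => hw0 k) hw1
        fun k _ => subset_convexHull ℝ _ ⟨k, rfl⟩
    have hμ : (fun i => evalP (∑ k, w k • a k) (lam i)) = w :=
      funext (evalP_lam_sum_smul hdeg hval hw1)
    have := congrFun hg ⟨_, hx⟩
    simp only [Finset.sum_apply, Pi.smul_apply, smul_eq_mul, Pi.zero_apply] at this
    rw [← hμ, ← sum_mul_evalP_bubble_eq_bubbleComb]
    exact this
  obtain ⟨hc, hd⟩ := eq_zero_of_bubbleComb_eq_zero
    (fun j => hcomb _ (vertexWeights_nonneg j) (sum_vertexWeights j))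
    (fun j => hcomb _ (faceCentroidWeights_nonneg j) (sum_faceCentroidWeights j))
  rintro (i | i)
  exacts [congrFun hc i, congrFun hd i]

/-- the eight cubic bubble functions `φᵢ` and `ψᵢ` are linearly
independent as functions on the tetrahedron. -/
theorem stmt2 (a : Fin 4 → E3) (hind : AffineIndependent ℝ a)
    (lam : Fin 4 → MvPolynomial (Fin 3) ℝ)
    (hdeg : ∀ i, (lam i).totalDegree ≤ 1)
    (hval : ∀ i j, evalP (a j) (lam i) = if i = j then 1 else 0) :
    LinearIndependent ℝ (fun s : Fin 4 ⊕ Fin 4 =>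
      (tetra a).restrict (fun x => evalP x
        (Sum.elim
          (fun i => 5 * lam i ^ 3 - 5 * lam i ^ 2 + lam i)
          (fun i => (-2) * lam i ^ 2 + 4 * lam i - 2
              + 3 * ∑ j ∈ Finset.univ.erase i, lam j ^ 2
              + 30 * ∏ j ∈ Finset.univ.erase i, lam j) s))) :=
  stmt2_general a lam hdeg hval
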